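/- Fix a positive integer n, and let L_n be the graph consisting of a path r, v_n, v_{n-1}, …, v_2, v_1 of length n together with 2^{n+1} internally disjoint paths of length 2 from v_1 to a common vertex u_0 (with middle vertices u_1, …, u_{2^{n+1}}). Define the weight function w by w(r) = 0, w(v_j) = 2^j for 1 ≤ j ≤ n, and w(u_i) = 1 for 0 ≤ i ≤ 2^{n+1}. Then w is valid: every configuration p with w(p) ≥ 2^{n+2} is r-solvable (equivalently, every r-unsolvable configuration satisfies w(p) ≤ w(1_{L_n}) = 2^{n+2} − 1). -/

import Mathlib

open SimpleGraph Finset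

def PebMove {V : Type*} [DecidableEq V] (G : SimpleGraph V) (p q : V → ℕ) : Prop :=
  ∃ u v, G.Adj u v ∧ 2 ≤ p u ∧
    q = fun x => if x = u then p u - 2 else if x = v then p v + 1 else p x

def Solvable {V : Type*} [DecidableEq V] (G : SimpleGraph V) (r : V) (p : V → ℕ) : Prop :=
  ∃ q, Relation.ReflTransGen (PebMove G) p q ∧ 1 ≤ q r

noncomputable def confWeight {V : Type*} [Fintype V] (w : V → ℝ) (p : V → ℕ) : ℝ :=
  ∑ v, (p v : ℝ) * w v

def ValidWeight {V : Type*} [Fintype V] [DecidableEq V] (G : SimpleGraph V) (r : V)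
    (w : V → ℝ) : Prop :=
  w r = 0 ∧ (∀ v, v ≠ r → 0 < w v) ∧
    ∀ p : V → ℕ, ¬ Solvable G r p → confWeight w p ≤ confWeight w (fun _ => 1)

noncomputable def rootedPebblingNumber {V : Type*} [Fintype V] [DecidableEq V]
    (G : SimpleGraph V) (r : V) : ℕ :=
  sInf {N | ∀ p : V → ℕ, N ≤ ∑ v, p v → Solvable G r p}

noncomputable def pebblingNumber {V : Type*} [Fintype V] [DecidableEq V]
    (G : SimpleGraph V) : ℕ :=
  sInf {N | ∀ (r : V) (p : V → ℕ), N ≤ ∑ v, p v → Solvable G r p}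

def cubeGraph (n : ℕ) : SimpleGraph (Fin n → Bool) :=
  SimpleGraph.fromRel (fun x y => hammingDist x y = 1)

def addPendant {V : Type*} (G : SimpleGraph V) (a : V) : SimpleGraph (Option V) :=
  SimpleGraph.fromRel (fun x y =>
    match x, y with
    | some u, some v => G.Adj u v
    | none, some u => u = a
    | _, _ => False)

def lollipop (n m : ℕ) : SimpleGraph (Fin (n + 1) ⊕ Fin (m + 1)) :=
  SimpleGraph.fromRel (fun x y =>
    match x, y with
    | Sum.inl i, Sum.inl j => (i : ℕ) + 1 = (j : ℕ)
    | Sum.inl i, Sum.inr j => i = 0 ∧ j ≠ 0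
    | Sum.inr i, Sum.inr j => i = 0 ∧ j ≠ 0
    | _, _ => False)

/-- Weight function on the lollipop: `Sum.inl i` is the path vertex `v_{i+1}`
(`Sum.inl n` being the root `r`), and `Sum.inr j` are the vertices `u_j`. -/
noncomputable def wL (n : ℕ) {m : ℕ} : (Fin (n + 1) ⊕ Fin (m + 1)) → ℝ
  | Sum.inl i => if (i : ℕ) = n then 0 else 2 ^ ((i : ℕ) + 1)
  | Sum.inr _ => 1

/-!
A pebble on the `i`-th vertex of the path `v_1, …, v_n, r` is worth `2 ^ i` pebbles on `v_1`
(counting from `0`), and halving along the path reaches `r` as soon as this path weight is at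
least `2 ^ n`. The hub `u_0` and the leaves `u_j` feed `v_1` greedily: a pair on a leaf sends one
pebble on, two hub pebbles complete a leaf holding an odd number, and four hub pebbles pass
through any other leaf. The weight `w` counts each path pebble at twice its path weight and every
other pebble as one unit: leaf pairs convert at this rate, topping up an odd leaf loses one unit,
and the remaining hub pebbles lose half their weight. As at most `2 ^ (n + 1)` leaves are odd,
weight `2 ^ (n + 2)` still leaves path weight `2 ^ n`, up to rounding.
-/

open Relation

section Moves

variable {V : Type*} [DecidableEq V] {G : SimpleGraph V}

theorem pebMove_add_single {u v : V} (huv : G.Adj u v) (c : V → ℕ) :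
    PebMove G (c + Pi.single u 2) (c + Pi.single v 1) := by
  refine ⟨u, v, huv, by simp, funext fun x => ?_⟩
  by_cases hxu : x = u
  · subst hxu; simp [huv.ne]
  · by_cases hxv : x = v
    · subst hxv; simp [hxu]
    · simp [hxu, hxv]

theorem PebMove.add_right {p q : V → ℕ} (h : PebMove G p q) (c : V → ℕ) :
    PebMove G (p + c) (q + c) := by
  obtain ⟨u, v, huv, hu, rfl⟩ := h
  refine ⟨u, v, huv, le_add_right hu, funext fun x => ?_⟩
  simp only [Pi.add_apply]
  split_ifs with hxu hxv
  · subst hxu; omega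
  · subst hxv; omega
  · rfl

theorem reflTransGen_pebMove_add_right {p q : V → ℕ} (h : ReflTransGen (PebMove G) p q)
    (c : V → ℕ) : ReflTransGen (PebMove G) (p + c) (q + c) :=
  h.lift (· + c) fun _ _ hm => hm.add_right c

theorem reflTransGen_pebMove_add_single_mul {u v : V} (huv : G.Adj u v) (c : V → ℕ) (k : ℕ) :
    ReflTransGen (PebMove G) (c + Pi.single u (2 * k)) (c + Pi.single v k) := by
  induction k generalizing c with
  | zero => simpa using .refl
  | succ k ih =>
    rw [mul_add_one, Pi.single_add, ← add_assoc]
    refine .head (pebMove_add_single huv _) ?_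
    convert ih (c + Pi.single v 1) using 1
    · exact add_right_comm _ _ _
    · rw [Pi.single_add]; abel

theorem Solvable.of_reflTransGen {r : V} {p q : V → ℕ} (hpq : ReflTransGen (PebMove G) p q)
    (hq : Solvable G r q) : Solvable G r p :=
  let ⟨q', hqq', hq'⟩ := hq
  ⟨q', hpq.trans hqq', hq'⟩

theorem exists_eq_add_single {p : V → ℕ} {s : V} {c : ℕ} (hc : c ≤ p s) :
    ∃ q : V → ℕ, p = q + Pi.single s c ∧ ∀ x ≠ s, q x = p x := by
  refine ⟨Function.update p s (p s - c), funext fun x => ?_, fun x hx => by simp [hx]⟩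
  by_cases hx : x = s
  · subst hx; simp; omega
  · simp [hx]

end Moves

section Path

variable {V : Type*} {n : ℕ}

def pathWeight (x : Fin (n + 1) → V) (p : V → ℕ) : ℕ := ∑ i, p (x i) * 2 ^ (i : ℕ)

theorem pathWeight_succ (x : Fin (n + 2) → V) (p : V → ℕ) :
    pathWeight x p = p (x 0) + 2 * pathWeight (x ∘ Fin.succ) p := by
  rw [pathWeight, pathWeight, Fin.sum_univ_succ, mul_sum]
  simp only [Fin.val_zero, pow_zero, mul_one, Fin.val_succ, Function.comp_apply]
  exact congrArg _ (sum_congr rfl fun i _ => by ring)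

theorem pathWeight_add_single_zero [DecidableEq V] {x : Fin (n + 1) → V} (hx : x.Injective)
    (q : V → ℕ) (k : ℕ) : pathWeight x (q + Pi.single (x 0) k) = pathWeight x q + k := by
  simp [pathWeight, Pi.single_apply, hx.eq_iff, add_mul, sum_add_distrib]

theorem solvable_of_two_pow_le_pathWeight [DecidableEq V] {G : SimpleGraph V}
    {x : Fin (n + 1) → V} (hx : x.Injective) (hadj : ∀ i : Fin n, G.Adj (x i.castSucc) (x i.succ))
    {p : V → ℕ} (hp : 2 ^ n ≤ pathWeight x p) : Solvable G (x (Fin.last n)) p := by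
  induction n generalizing p with
  | zero => exact ⟨p, .refl, by simpa [pathWeight] using hp⟩
  | succ n ih =>
    set k := p (x 0) / 2
    obtain ⟨q, hpq, hq⟩ := exists_eq_add_single (p := p) (s := x 0) (c := 2 * k) (by omega)
    have hmove : ReflTransGen (PebMove G) p (q + Pi.single ((x ∘ Fin.succ) 0) k) :=
      hpq ▸ reflTransGen_pebMove_add_single_mul (hadj 0) q k
    have hx' : (x ∘ Fin.succ).Injective := hx.comp (Fin.succ_injective _)
    refine Solvable.of_reflTransGen hmove ?_
    rw [← Fin.succ_last]
    refine ih hx' (fun i => hadj i.succ) ?_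
    have htail : pathWeight (x ∘ Fin.succ) q = pathWeight (x ∘ Fin.succ) p :=
      sum_congr rfl fun i _ => by rw [Function.comp_apply, hq _ (hx.ne (Fin.succ_ne_zero i))]
    rw [pathWeight_add_single_zero hx', htail]
    rw [pathWeight_succ, pow_succ] at hp
    omega

end Path

section Relay

variable {V : Type*} {G : SimpleGraph V} {S : Finset V} {a h : V}

/-- Pebbles a hub holding `k` pebbles can pass on through its leaves when `t` of them hold an odd
number of pebbles: two hub pebbles make an odd leaf pass one on, through any other leaf it takes
four. -/
def hubYield (t k : ℕ) : ℕ := if k ≤ 2 * t then k / 2 else t + (k - 2 * t) / 4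

theorem hubYield_succ_add_two_le (t k : ℕ) : hubYield (t + 1) (k + 2) ≤ hubYield t k + 1 := by
  unfold hubYield; split_ifs <;> omega

theorem hubYield_zero_add_four_le (k : ℕ) : hubYield 0 (k + 4) ≤ hubYield 0 k + 1 := by
  unfold hubYield; split_ifs <;> omega

theorem hubYield_eq_zero {t k : ℕ} (h : k ≤ 1 ∨ t = 0 ∧ k ≤ 3) : hubYield t k = 0 := by
  unfold hubYield; split_ifs <;> omega

theorem le_add_hubYield {M b t k : ℕ} (h : 4 * M ≤ 2 * b + t + k) (ht : t ≤ 2 * M) :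
    M ≤ b + hubYield t k := by
  unfold hubYield; split_ifs <;> omega

/-- Pebbles the leaves `S` and the hub `h` can deliver to a common neighbour of the leaves. -/
def relayYield (S : Finset V) (h : V) (p : V → ℕ) : ℕ :=
  ∑ s ∈ S, p s / 2 + hubYield (∑ s ∈ S, p s % 2) (p h)

theorem relayYield_eq_zero {p : V → ℕ} (hleaf : ∀ s ∈ S, p s < 2)
    (hpair : ∀ s ∈ S, p s % 2 = 1 → p h < 2) (hhub : (∀ s ∈ S, p s % 2 = 0) → p h < 4) :
    relayYield S h p = 0 := by
  have hhalf : ∑ s ∈ S, p s / 2 = 0 := sum_eq_zero fun s hs => by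
    have := hleaf s hs
    omega
  rw [relayYield, hhalf, zero_add]
  apply hubYield_eq_zero
  by_cases heven : ∀ s ∈ S, p s % 2 = 0
  · rw [sum_eq_zero heven]
    exact Or.inr ⟨rfl, by have := hhub heven; omega⟩
  · push Not at heven
    obtain ⟨s, hs, hodd⟩ := heven
    exact Or.inl (by have := hpair s hs (by omega); omega)

variable [DecidableEq V]

theorem sum_comp_add_single_of_mem (g : ℕ → ℕ) {s : V} (hs : s ∈ S) (q : V → ℕ) (c : ℕ) :
    ∑ x ∈ S, g ((q + Pi.single s c : V → ℕ) x) + g (q s) = ∑ x ∈ S, g (q x) + g (q s + c) := by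
  have hrest : ∑ x ∈ S.erase s, g ((q + Pi.single s c : V → ℕ) x) = ∑ x ∈ S.erase s, g (q x) :=
    sum_congr rfl fun x hx => by simp [(mem_erase.1 hx).1]
  rw [← add_sum_erase S _ hs, ← add_sum_erase S (fun x => g (q x)) hs, hrest]
  simp only [Pi.add_apply, Pi.single_eq_same]
  ring

theorem relayYield_add_single_hub (hh : h ∉ S) (q : V → ℕ) (c : ℕ) :
    relayYield S h (q + Pi.single h c) =
      ∑ s ∈ S, q s / 2 + hubYield (∑ s ∈ S, q s % 2) (q h + c) := by
  have hleaf : ∀ s ∈ S, (q + Pi.single h c : V → ℕ) s = q s := fun s hs => by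
    simp [ne_of_mem_of_not_mem hs hh]
  rw [relayYield, sum_congr rfl fun s hs => congrArg (· / 2) (hleaf s hs),
    sum_congr rfl fun s hs => congrArg (· % 2) (hleaf s hs)]
  simp

theorem relayYield_add_single_leaf {s : V} (hs : s ∈ S) (hsh : s ≠ h) (q : V → ℕ) :
    relayYield S h (q + Pi.single s 2) = relayYield S h q + 1 := by
  have hhalf := sum_comp_add_single_of_mem (· / 2) hs q 2
  have hodd := sum_comp_add_single_of_mem (· % 2) hs q 2
  have hhub : (q + Pi.single s 2 : V → ℕ) h = q h := by simp [hsh.symm]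
  simp only [relayYield, hhub]
  rw [show ∑ x ∈ S, (q + Pi.single s 2 : V → ℕ) x % 2 = ∑ x ∈ S, q x % 2 by omega]
  omega

theorem relayYield_add_single_leaf_hub_le {s : V} (hs : s ∈ S) (hh : h ∉ S) {q : V → ℕ}
    (heven : q s % 2 = 0) :
    relayYield S h (q + Pi.single s 1 + Pi.single h 2) ≤ relayYield S h q + 1 := by
  have hhalf := sum_comp_add_single_of_mem (· / 2) hs q 1
  have hodd := sum_comp_add_single_of_mem (· % 2) hs q 1
  have hhub : (q + Pi.single s 1 : V → ℕ) h = q h := by simp [ne_of_mem_of_not_mem hs hh]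
  rw [relayYield_add_single_hub hh, hhub, relayYield]
  rw [show ∑ x ∈ S, (q + Pi.single s 1 : V → ℕ) x % 2 = ∑ x ∈ S, q x % 2 + 1 by omega]
  have := hubYield_succ_add_two_le (∑ x ∈ S, q x % 2) (q h)
  omega

theorem relayYield_add_single_hub_le (hh : h ∉ S) {q : V → ℕ} (heven : ∀ s ∈ S, q s % 2 = 0) :
    relayYield S h (q + Pi.single h 4) ≤ relayYield S h q + 1 := by
  rw [relayYield_add_single_hub hh, relayYield, sum_eq_zero heven]
  have := hubYield_zero_add_four_le (q h)
  omega

theorem reflTransGen_pebMove_relay_pair {s : V} (hhs : G.Adj h s) (hsa : G.Adj s a)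
    (q : V → ℕ) :
    ReflTransGen (PebMove G) (q + Pi.single s 1 + Pi.single h 2) (q + Pi.single a 1) := by
  refine .head (pebMove_add_single hhs _) (.single ?_)
  rw [add_assoc, ← Pi.single_add]
  exact pebMove_add_single hsa q

theorem reflTransGen_pebMove_relay_hub {s : V} (hhs : G.Adj h s) (hsa : G.Adj s a)
    (q : V → ℕ) : ReflTransGen (PebMove G) (q + Pi.single h 4) (q + Pi.single a 1) :=
  (reflTransGen_pebMove_add_single_mul hhs q 2).tail (pebMove_add_single hsa q)

theorem exists_relay_step (hS : ∀ s ∈ S, G.Adj h s ∧ G.Adj s a) (hne : S.Nonempty)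
    {p : V → ℕ} (hp : 0 < relayYield S h p) :
    ∃ q, ReflTransGen (PebMove G) p (q + Pi.single a 1) ∧ Set.EqOn p q (↑(insert h S))ᶜ ∧
      relayYield S h p ≤ relayYield S h q + 1 := by
  have hh : h ∉ S := fun hh => (hS h hh).1.ne rfl
  have hoff {x s : V} (hx : x ∈ (↑(insert h S) : Set V)ᶜ) (hs : s ∈ S) : x ≠ h ∧ x ≠ s := by
    simp only [Set.mem_compl_iff, coe_insert, Set.mem_insert_iff, mem_coe, not_or] at hx
    exact ⟨hx.1, (ne_of_mem_of_not_mem hs hx.2).symm⟩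
  by_cases hleaf : ∃ s ∈ S, 2 ≤ p s
  · obtain ⟨s, hs, h2⟩ := hleaf
    obtain ⟨q, rfl, -⟩ := exists_eq_add_single h2
    refine ⟨q, .single (pebMove_add_single (hS s hs).2 q), fun x hx => ?_,
      (relayYield_add_single_leaf hs (hS s hs).1.ne.symm q).le⟩
    simp [(hoff hx hs).2]
  by_cases hpair : ∃ s ∈ S, p s % 2 = 1 ∧ 2 ≤ p h
  · obtain ⟨s, hs, hodd, h2⟩ := hpair
    obtain ⟨q₁, rfl, -⟩ := exists_eq_add_single h2
    have hsh : s ≠ h := (hS s hs).1.ne.symm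
    simp only [Pi.add_apply, Pi.single_eq_of_ne hsh, add_zero] at hodd
    obtain ⟨q, rfl, -⟩ := exists_eq_add_single (c := 1) (p := q₁) (s := s) (by omega)
    refine ⟨q, reflTransGen_pebMove_relay_pair (hS s hs).1 (hS s hs).2 q, fun x hx => ?_,
      relayYield_add_single_leaf_hub_le hs hh ?_⟩
    · simp [(hoff hx hs).1, (hoff hx hs).2]
    · simp only [Pi.add_apply, Pi.single_eq_same] at hodd
      omega
  by_cases hhub : (∀ s ∈ S, p s % 2 = 0) ∧ 4 ≤ p h
  · obtain ⟨heven, h4⟩ := hhub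
    obtain ⟨s, hs⟩ := hne
    obtain ⟨q, rfl, -⟩ := exists_eq_add_single h4
    refine ⟨q, reflTransGen_pebMove_relay_hub (hS s hs).1 (hS s hs).2 q, fun x hx => ?_,
      relayYield_add_single_hub_le hh fun t ht => ?_⟩
    · simp [(hoff hx hs).1]
    · simpa [ne_of_mem_of_not_mem ht hh] using heven t ht
  push Not at hleaf hpair hhub
  rw [relayYield_eq_zero hleaf hpair hhub] at hp
  exact absurd hp (lt_irrefl 0)

theorem exists_relay (hS : ∀ s ∈ S, G.Adj h s ∧ G.Adj s a) (hne : S.Nonempty) :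
    ∀ (N : ℕ) (p : V → ℕ), N ≤ relayYield S h p →
      ∃ q, ReflTransGen (PebMove G) p (q + Pi.single a N) ∧ Set.EqOn p q (↑(insert h S))ᶜ
  | 0, p, _ => ⟨p, by simpa using .refl, Set.eqOn_refl _ _⟩
  | N + 1, p, hN => by
    obtain ⟨q, hpq, hpq_eq, hq⟩ := exists_relay_step hS hne (p := p) (by omega)
    obtain ⟨r, hqr, hqr_eq⟩ := exists_relay hS hne N q (by omega)
    refine ⟨r, hpq.trans ?_, hpq_eq.trans hqr_eq⟩
    simpa [Pi.single_add, add_assoc] using reflTransGen_pebMove_add_right hqr (Pi.single a 1)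

end Relay

section Lollipop

variable {n m : ℕ}

def lollipopLeaves (n m : ℕ) : Finset (Fin (n + 1) ⊕ Fin (m + 1)) :=
  (univ.erase 0).map .inr

theorem lollipop_adj_inl (i : Fin n) :
    (lollipop n m).Adj (.inl i.castSucc) (.inl i.succ) := by
  simp [lollipop, Fin.castSucc_lt_succ.ne]

theorem lollipop_adj_of_mem_leaves {s : Fin (n + 1) ⊕ Fin (m + 1)}
    (hs : s ∈ lollipopLeaves n m) :
    (lollipop n m).Adj (.inr 0) s ∧ (lollipop n m).Adj s (.inl 0) := by
  obtain ⟨j, hj, rfl⟩ := mem_map.1 hs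
  have hj : j ≠ 0 := (mem_erase.1 hj).1
  simp [lollipop, hj, Ne.symm hj]

theorem lollipopLeaves_nonempty (hm : 0 < m) : (lollipopLeaves n m).Nonempty :=
  ⟨.inr ⟨1, by omega⟩, mem_map_of_mem _ (mem_erase.2 ⟨by simp [Fin.ext_iff], mem_univ _⟩)⟩

theorem two_pow_le_pathWeight_add_relayYield (hm : m ≤ 2 ^ (n + 1))
    {p : Fin (n + 1) ⊕ Fin (m + 1) → ℕ} (hp : (2 : ℝ) ^ (n + 2) ≤ confWeight (wL n) p) :
    2 ^ n ≤ pathWeight Sum.inl p + relayYield (lollipopLeaves n m) (.inr 0) p := by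
  set L := lollipopLeaves n m with hL
  have hweight : 2 ^ (n + 2) ≤ 2 * pathWeight Sum.inl p + ∑ j, p (.inr j) := by
    have hpath :
        ∑ i, (p (.inl i) : ℝ) * wL n (m := m) (.inl i) ≤ 2 * (pathWeight Sum.inl p : ℝ) := by
      rw [pathWeight, Nat.cast_sum, mul_sum]
      refine sum_le_sum fun i _ => ?_
      push_cast
      rw [wL]
      split_ifs
      · rw [mul_zero]; positivity
      · exact le_of_eq (by ring)
    rw [confWeight, Fintype.sum_sum_type] at hp
    simp only [wL, mul_one] at hp hpath
    exact_mod_cast hp.trans (add_le_add_left hpath _)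
  have hleaves : ∑ j, p (.inr j) = p (.inr 0) + ∑ s ∈ L, p s := by
    rw [hL, lollipopLeaves, sum_map, ← add_sum_erase _ _ (mem_univ 0)]
    rfl
  have hsplit : ∑ s ∈ L, p s = 2 * ∑ s ∈ L, p s / 2 + ∑ s ∈ L, p s % 2 := by
    rw [mul_sum, ← sum_add_distrib]
    exact sum_congr rfl fun s _ => (Nat.div_add_mod _ _).symm
  have hodd : ∑ s ∈ L, p s % 2 ≤ 2 * 2 ^ n := calc
    _ ≤ ∑ s ∈ L, 1 := sum_le_sum fun s _ => Nat.le_of_lt_succ (Nat.mod_lt _ two_pos)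
    _ = m := by simp [L, lollipopLeaves]
    _ ≤ 2 * 2 ^ n := by rwa [pow_succ, mul_comm] at hm
  have := le_add_hubYield (b := pathWeight Sum.inl p + ∑ s ∈ L, p s / 2) (k := p (.inr 0))
    (by rw [pow_add] at hweight; omega) hodd
  rw [relayYield]
  omega

theorem solvable_lollipop_of_two_pow_le_confWeight (hm₀ : 0 < m) (hm : m ≤ 2 ^ (n + 1))
    {p : Fin (n + 1) ⊕ Fin (m + 1) → ℕ} (hp : (2 : ℝ) ^ (n + 2) ≤ confWeight (wL n) p) :
    Solvable (lollipop n m) (.inl (Fin.last n)) p := by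
  obtain ⟨q, hpq, hpq_eq⟩ := exists_relay (a := .inl 0)
    (fun s hs => lollipop_adj_of_mem_leaves hs) (lollipopLeaves_nonempty hm₀) _ p le_rfl
  refine Solvable.of_reflTransGen hpq
    (solvable_of_two_pow_le_pathWeight Sum.inl_injective lollipop_adj_inl ?_)
  have hpath : pathWeight Sum.inl q = pathWeight Sum.inl p :=
    sum_congr rfl fun i _ => by rw [hpq_eq (by simp [lollipopLeaves])]
  rw [pathWeight_add_single_zero Sum.inl_injective, hpath]
  exact two_pow_le_pathWeight_add_relayYield hm hp

end Lollipop

theorem stmt13_general (n : ℕ) :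
    ∀ p : (Fin (n + 1) ⊕ Fin (2 ^ (n + 1) + 1)) → ℕ,
      (2 : ℝ) ^ (n + 2) ≤ confWeight (wL n) p →
      Solvable (lollipop n (2 ^ (n + 1))) (Sum.inl (Fin.last n)) p :=
  fun _ hp => solvable_lollipop_of_two_pow_le_confWeight (by positivity) le_rfl hp

theorem stmt13 (n : ℕ) (hn : 1 ≤ n) :
    ∀ p : (Fin (n + 1) ⊕ Fin (2 ^ (n + 1) + 1)) → ℕ,
      (2 : ℝ) ^ (n + 2) ≤ confWeight (wL n) p →
      Solvable (lollipop n (2 ^ (n + 1))) (Sum.inl (Fin.last n)) p :=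
  stmt13_general n
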